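/- Upcrossing-variation inequality for a single grid: for any continuous f : [0,T] → ℝ, any δ > 0, and any p > 0, the strong p-variation satisfies var_p(f,[0,T]) ≥ δ^p · M_T(f,δ), where M_T(f,δ) = Σ_{k∈ℤ} M_T(f,(kδ,(k+1)δ)) is the total number of upcrossings of δ-grid intervals. -/

import Mathlib

open scoped ENNReal

noncomputable section

/-- Strong `p`-variation of `f` over `[a,b]`: the supremum over all finite
subdivisions `a = t₀ < t₁ < ⋯ < tₙ = b` of `Σᵢ |f(tᵢ) − f(tᵢ₋₁)|^p`. -/
def pVar (p : ℝ) (f : ℝ → ℝ) (a b : ℝ) : ℝ≥0∞ :=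
  ⨆ (n : ℕ) (t : Fin (n + 1) → ℝ)
    (_ : StrictMono t ∧ t 0 = a ∧ t (Fin.last n) = b),
    ∑ i : Fin n, ENNReal.ofReal (|f (t i.succ) - f (t i.castSucc)| ^ p)

/-- `v` is a strong variation exponent of `f` over `[0,T]`:
`var_p(f)` is finite for `p > v` and infinite for `p < v`. -/
def IsVex (T : ℝ) (f : ℝ → ℝ) (v : ℝ≥0∞) : Prop :=
  (∀ p : ℝ, 0 < p → v < ENNReal.ofReal p → pVar p f 0 T < ⊤) ∧
  (∀ p : ℝ, 0 < p → ENNReal.ofReal p < v → pVar p f 0 T = ⊤)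

/-- The strong variation exponent of `f` over `[0,T]`. -/
def vex (T : ℝ) (f : ℝ → ℝ) : ℝ≥0∞ :=
  sInf {v : ℝ≥0∞ | ∀ p : ℝ, 0 < p → v < ENNReal.ofReal p → pVar p f 0 T < ⊤}

/-- The sample space: continuous real-valued functions on `[0,T]`. -/
def GSpace (T : ℝ) := {f : ℝ → ℝ // ContinuousOn f (Set.Icc 0 T)}

/-- The filtration: `ℱ_t` is generated by the evaluation maps `ω ↦ ω(s)`, `s ∈ [0,t]`. -/
def gFiltration (T t : ℝ) : MeasurableSpace (GSpace T) :=
  ⨆ s ∈ Set.Icc (0 : ℝ) t, MeasurableSpace.comap (fun ω : GSpace T => ω.1 s) inferInstance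

/-- An elementary trading strategy: an increasing sequence of stopping times
`τₙ` (with values in `[0,T] ∪ {∞}`, only finitely many finite on each `ω`)
together with bounded `ℱ_{τₙ}`-measurable portfolios `hₙ`. -/
structure ElemStrategy (T : ℝ) where
  τ : ℕ → GSpace T → ℝ≥0∞
  h : ℕ → GSpace T → ℝ
  mono : ∀ n ω, τ n ω ≤ τ (n + 1) ω
  codom : ∀ n ω, τ n ω ≤ ENNReal.ofReal T ∨ τ n ω = ⊤
  fin : ∀ ω, Set.Finite {n | τ n ω ≠ ⊤}
  stopping : ∀ n (t : ℝ), (gFiltration T t).MeasurableSet' {ω | τ n ω ≤ ENNReal.ofReal t}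
  bdd : ∀ n, ∃ C : ℝ, ∀ ω, |h n ω| ≤ C
  adapted : ∀ n (B : Set ℝ), MeasurableSet B → ∀ t : ℝ,
    (gFiltration T t).MeasurableSet' ({ω | h n ω ∈ B} ∩ {ω | τ n ω ≤ ENNReal.ofReal t})

/-- The elementary capital process
`K_t(ω) = c + Σₙ hₙ(ω) (ω(τ_{n+1} ∧ t) − ω(τₙ ∧ t))`. -/
def ElemStrategy.capital {T : ℝ} (G : ElemStrategy T) (c : ℝ) (t : ℝ) (ω : GSpace T) : ℝ :=
  c + ∑' n : ℕ,
    G.h n ω * (ω.1 ((G.τ (n + 1) ω ⊓ ENNReal.ofReal t).toReal)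
      - ω.1 ((G.τ n ω ⊓ ENNReal.ofReal t).toReal))

/-- A positive capital process: a countable sum of positive elementary capital
processes with summable positive initial capitals. -/
structure PosCapital (T : ℝ) where
  G : ℕ → ElemStrategy T
  c : ℕ → ℝ
  c_nonneg : ∀ n, 0 ≤ c n
  c_summable : Summable c
  pos : ∀ n (t : ℝ), t ∈ Set.Icc 0 T → ∀ ω, 0 ≤ (G n).capital (c n) t ω

/-- The value (in `[0,∞]`) of a positive capital process at time `t`. -/
def PosCapital.value {T : ℝ} (S : PosCapital T) (t : ℝ) (ω : GSpace T) : ℝ≥0∞ :=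
  ∑' n : ℕ, ENNReal.ofReal ((S.G n).capital (S.c n) t ω)

/-- The initial value `S₀ = Σₙ cₙ` of a positive capital process. -/
def PosCapital.init {T : ℝ} (S : PosCapital T) : ℝ≥0∞ :=
  ∑' n : ℕ, ENNReal.ofReal (S.c n)

/-- Game-theoretic upper probability of `E ⊆ Ω`:
`inf {S₀ : S positive capital process, S_T ≥ 1_E}`. -/
def upperProb (T : ℝ) (E : Set (GSpace T)) : ℝ≥0∞ :=
  ⨅ (S : PosCapital T) (_ : ∀ ω, E.indicator (fun _ => (1 : ℝ≥0∞)) ω ≤ S.value T ω), S.init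

/-- The number of upcrossings (as an element of `[0,∞]`) of the open interval
`(a,b)` by `f` during the time interval `[0,t]`. -/
def upcross (f : ℝ → ℝ) (a b t : ℝ) : ℝ≥0∞ :=
  ⨆ (n : ℕ) (u : Fin n → ℝ) (v : Fin n → ℝ)
    (_ : (∀ i, 0 ≤ u i ∧ u i < v i ∧ v i ≤ t) ∧
         (∀ i j : Fin n, i < j → v i < u j) ∧
         (∀ i, f (u i) < a ∧ b < f (v i))),
    (n : ℝ≥0∞)

/-- `M_t(f,δ) = Σ_{k∈ℤ} M_t(f,(kδ,(k+1)δ))`: the total number of upcrossings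
of the intervals of the `δ`-grid by `f` during `[0,t]`. -/
def gridUpcross (f : ℝ → ℝ) (δ t : ℝ) : ℝ≥0∞ :=
  ∑' k : ℤ, upcross f (k * δ) ((k + 1) * δ) t

/-- The successive hitting times of new points of the grid `δℤ`:
`τ₀ = 0`, `τ_{n+1} = inf {t ∈ (τₙ, T] : f(t) ∈ δℤ \ {f(τₙ)}}` (with `inf ∅ = ∞`). -/
def gridTimes (T δ : ℝ) (f : ℝ → ℝ) : ℕ → ℝ≥0∞
  | 0 => 0
  | n + 1 => sInf {s : ℝ≥0∞ | ∃ t : ℝ, s = ENNReal.ofReal t ∧ t ≤ T ∧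
      gridTimes T δ f n < ENNReal.ofReal t ∧ (∃ k : ℤ, f t = (k : ℝ) * δ) ∧
      f t ≠ f ((gridTimes T δ f n).toReal)}

/-!
Inside every upcrossing of a grid cell `(kδ, (k+1)δ)` there is a crossing interval `[s, t]`
with `f s = kδ`, `f t = (k+1)δ` and `f` strictly inside the cell on `(s, t)`. Crossing
intervals of one cell are disjoint because the upcrossings are; those of different cells
are disjoint because `f` maps their interiors into disjoint cells. Refining `{0, T}` by all
their endpoints gives a partition in which each crossing interval is a gap contributing
exactly `δ ^ p` to the `p`-variation sum.
-/

open Set Function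

theorem ENNReal.finsetSum_iSup_le {α : Type*} {ι : α → Type*} [∀ a, Nonempty (ι a)]
    {s : Finset α} {f : ∀ a, ι a → ℝ≥0∞} {c : ℝ≥0∞}
    (h : ∀ g : ∀ a, ι a, ∑ a ∈ s, f a (g a) ≤ c) : ∑ a ∈ s, ⨆ i, f a i ≤ c := by
  classical
  -- an offset `b` lets the induction absorb one supremum at a time
  suffices key : ∀ b, (∀ g : ∀ a, ι a, b + ∑ a ∈ s, f a (g a) ≤ c) →
      b + ∑ a ∈ s, ⨆ i, f a i ≤ c by
    simpa using key 0 (by simpa using h)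
  clear h
  induction s using Finset.induction_on with
  | empty => exact fun b hb => by simpa using hb fun _ => Classical.arbitrary _
  | insert a s ha ih =>
    intro b hb
    rw [Finset.sum_insert ha, ← add_assoc, ENNReal.add_iSup, ENNReal.iSup_add]
    refine iSup_le fun i => ih _ fun g => ?_
    have hg := hb (Function.update g a i)
    rwa [Finset.sum_insert ha, Function.update_self, ← add_assoc,
      Finset.sum_congr rfl fun x hx => by
        rw [Function.update_of_ne (ne_of_mem_of_not_mem hx ha)]] at hg

theorem Fin.exists_castSucc_eq_and_succ_eq {n : ℕ} {i k : Fin (n + 1)} (hik : i < k)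
    (hgap : ∀ l, ¬(i < l ∧ l < k)) : ∃ m : Fin n, m.castSucc = i ∧ m.succ = k := by
  have := hgap ⟨i + 1, by omega⟩
  simp only [Fin.lt_def] at this hik
  exact ⟨⟨i, by omega⟩, Fin.ext rfl, Fin.ext (by simp; omega)⟩

theorem sum_le_pVar {p : ℝ} {f : ℝ → ℝ} {a b : ℝ} {n : ℕ} {t : Fin (n + 1) → ℝ}
    (ht : StrictMono t) (h0 : t 0 = a) (hn : t (Fin.last n) = b) :
    ∑ i : Fin n, ENNReal.ofReal (|f (t i.succ) - f (t i.castSucc)| ^ p) ≤ pVar p f a b :=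
  le_iSup_of_le n <| le_iSup_of_le t <| le_iSup_of_le ⟨ht, h0, hn⟩ le_rfl

theorem sum_le_pVar_of_gaps {ι : Type*} [Fintype ι] (p : ℝ) (f : ℝ → ℝ) {a b : ℝ}
    {E : Finset ℝ} (haE : a ∈ E) (hbE : b ∈ E) (hE : ∀ x ∈ E, a ≤ x ∧ x ≤ b)
    {lo hi : ι → ℝ} (hloE : ∀ j, lo j ∈ E) (hhiE : ∀ j, hi j ∈ E) (hlt : ∀ j, lo j < hi j)
    (hgap : ∀ j, ∀ x ∈ E, x ∉ Ioo (lo j) (hi j)) (hinj : Injective lo) :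
    ∑ j, ENNReal.ofReal (|f (hi j) - f (lo j)| ^ p) ≤ pVar p f a b := by
  obtain ⟨n, hn⟩ := Nat.exists_eq_add_one.2 (Finset.card_pos.2 ⟨a, haE⟩)
  set e := E.orderEmbOfFin hn
  have hsurj : ∀ x ∈ E, ∃ i, e i = x := fun x hx => by
    rw [← Set.mem_range, Finset.range_orderEmbOfFin]
    exact hx
  have he0 : e 0 = a := by
    obtain ⟨i, hi⟩ := hsurj a haE
    exact le_antisymm (hi ▸ e.monotone (Fin.zero_le i)) (hE _ (E.orderEmbOfFin_mem hn 0)).1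
  have helast : e (Fin.last n) = b := by
    obtain ⟨i, hi⟩ := hsurj b hbE
    exact le_antisymm (hE _ (E.orderEmbOfFin_mem hn _)).2 (hi ▸ e.monotone (Fin.le_last i))
  have hconsec : ∀ j, ∃ m : Fin n, e m.castSucc = lo j ∧ e m.succ = hi j := by
    intro j
    obtain ⟨i, hei⟩ := hsurj (lo j) (hloE j)
    obtain ⟨k, hek⟩ := hsurj (hi j) (hhiE j)
    have hik : i < k := e.lt_iff_lt.1 (hei ▸ hek ▸ hlt j)
    obtain ⟨m, rfl, rfl⟩ := Fin.exists_castSucc_eq_and_succ_eq hik fun l hl =>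
      hgap j _ (E.orderEmbOfFin_mem hn l)
        (hei ▸ hek ▸ ⟨e.strictMono hl.1, e.strictMono hl.2⟩)
    exact ⟨m, hei, hek⟩
  choose idx hidx_lo hidx_hi using hconsec
  have hidx : Injective idx := fun j j' h => hinj <| by rw [← hidx_lo j, ← hidx_lo j', h]
  set F : Fin n → ℝ≥0∞ := fun m => ENNReal.ofReal (|f (e m.succ) - f (e m.castSucc)| ^ p)
  calc ∑ j, ENNReal.ofReal (|f (hi j) - f (lo j)| ^ p)
      = ∑ j, F (idx j) := by simp only [F, hidx_lo, hidx_hi]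
    _ = ∑ m ∈ Finset.univ.map ⟨idx, hidx⟩, F m := by rw [Finset.sum_map]; rfl
    _ ≤ ∑ m, F m := Finset.sum_le_sum_of_subset (Finset.subset_univ _)
    _ ≤ pVar p f a b := sum_le_pVar e.strictMono he0 helast

theorem sum_le_pVar_of_pairwise_disjoint {ι : Type*} [Fintype ι] (p : ℝ) (f : ℝ → ℝ)
    {a b : ℝ} {lo hi : ι → ℝ} (hlo : ∀ j, a ≤ lo j) (hlt : ∀ j, lo j < hi j)
    (hhi : ∀ j, hi j ≤ b) (hdisj : Pairwise (Disjoint on fun j => Ioo (lo j) (hi j))) :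
    ∑ j, ENNReal.ofReal (|f (hi j) - f (lo j)| ^ p) ≤ pVar p f a b := by
  classical
  rcases isEmpty_or_nonempty ι with _ | ⟨⟨j₀⟩⟩
  · simp
  have hab : a ≤ b := (hlo j₀).trans ((hlt j₀).le.trans (hhi j₀))
  have hsep : ∀ j j', j ≠ j' → hi j ≤ lo j' ∨ hi j' ≤ lo j := fun j j' hne => by
    have := Ioo_disjoint_Ioo.1 (hdisj hne)
    simp only [min_le_iff, le_max_iff] at this
    rcases this with (h | h) | h | h
    exacts [absurd h (hlt j).not_ge, .inr h, .inl h, absurd h (hlt j').not_ge]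
  set E : Finset ℝ := insert a (insert b (Finset.univ.image lo ∪ Finset.univ.image hi))
  have hmemE : ∀ x, x ∈ E ↔ x = a ∨ x = b ∨ (∃ j, lo j = x) ∨ ∃ j, hi j = x := by
    simp [E]
  refine sum_le_pVar_of_gaps p f (E := E) (by simp [E]) (by simp [E]) ?_ (by simp [E])
    (by simp [E]) hlt ?_ ?_
  · simp only [hmemE]
    rintro x (rfl | rfl | ⟨j, rfl⟩ | ⟨j, rfl⟩)
    exacts [⟨le_rfl, hab⟩, ⟨hab, le_rfl⟩, ⟨hlo j, (hlt j).le.trans (hhi j)⟩,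
      ⟨(hlo j).trans (hlt j).le, hhi j⟩]
  · simp only [hmemE]
    rintro j x (rfl | rfl | ⟨j', rfl⟩ | ⟨j', rfl⟩) ⟨hjx, hxj⟩
    · exact (hlo j).not_gt hjx
    · exact (hhi j).not_gt hxj
    all_goals
      obtain rfl | hne := eq_or_ne j j'
      · linarith
      rcases hsep j j' hne with h | h <;> linarith [hlt j, hlt j']
  · intro j j' h
    by_contra hne
    rcases hsep j j' hne with h' | h' <;> linarith [hlt j, hlt j']

theorem ContinuousOn.exists_crossing {f : ℝ → ℝ} {u v A B : ℝ} (hf : ContinuousOn f (Icc u v))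
    (huv : u ≤ v) (hA : f u < A) (hAB : A < B) (hB : B < f v) :
    ∃ s t, u ≤ s ∧ s < t ∧ t ≤ v ∧ f s = A ∧ f t = B ∧ MapsTo f (Ioo s t) (Ioo A B) := by
  have hlevel : ∀ {x y : ℝ} (C : ℝ), Icc x y ⊆ Icc u v →
      IsCompact (Icc x y ∩ f ⁻¹' {C}) := fun C hsub =>
    isCompact_Icc.of_isClosed_subset
      ((hf.mono hsub).preimage_isClosed_of_isClosed isClosed_Icc isClosed_singleton)
      inter_subset_left
  -- `s` is the last visit of `A` in `[u, v]`, `t` the first visit of `B` after `s`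
  obtain ⟨s, ⟨⟨hus, hsv⟩, hfs⟩, hs_last⟩ := (hlevel A subset_rfl).exists_isGreatest
    (intermediate_value_Icc huv hf ⟨hA.le, (hAB.trans hB).le⟩)
  have hfs : f s = A := hfs
  have hsub : Icc s v ⊆ Icc u v := Icc_subset_Icc_left hus
  obtain ⟨t, ⟨⟨hst, htv⟩, hft⟩, ht_first⟩ := (hlevel B hsub).exists_isLeast
    (intermediate_value_Icc hsv (hf.mono hsub) ⟨hfs ▸ hAB.le, hB.le⟩)
  have hft : f t = B := hft
  have hst : s < t := hst.lt_of_ne fun h => hAB.ne (hfs ▸ hft ▸ congrArg f h)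
  refine ⟨s, t, hus, hst, htv, hfs, hft, fun x ⟨hsx, hxt⟩ => ⟨?_, ?_⟩⟩
  · by_contra! hxA
    obtain ⟨y, ⟨hxy, hyt⟩, hfy⟩ := intermediate_value_Icc hxt.le
      (hf.mono (Icc_subset_Icc (hus.trans hsx.le) htv)) ⟨hxA, hft ▸ hAB.le⟩
    exact (hsx.trans_le hxy).not_ge
      (hs_last ⟨⟨hus.trans (hsx.le.trans hxy), hyt.trans htv⟩, hfy⟩)
  · by_contra! hxB
    obtain ⟨y, ⟨hsy, hyx⟩, hfy⟩ := intermediate_value_Icc hsx.le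
      (hf.mono (Icc_subset_Icc hus (hxt.le.trans htv))) ⟨hfs ▸ hAB.le, hxB⟩
    exact (hyx.trans_lt hxt).not_ge (ht_first ⟨⟨hsy, hyx.trans (hxt.le.trans htv)⟩, hfy⟩)

theorem disjoint_Ioo_int_mul {δ : ℝ} (hδ : 0 < δ) {k k' : ℤ} (h : k ≠ k') :
    Disjoint (Ioo (k * δ) ((k + 1) * δ)) (Ioo (k' * δ) ((k' + 1) * δ)) := by
  rw [Ioo_disjoint_Ioo]
  rcases h.lt_or_gt with h | h
  · have : (k + 1 : ℝ) ≤ k' := by exact_mod_cast h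
    exact (min_le_left _ _).trans <|
      (mul_le_mul_of_nonneg_right this hδ.le).trans (le_max_right _ _)
  · have : (k' + 1 : ℝ) ≤ k := by exact_mod_cast h
    exact (min_le_right _ _).trans <|
      (mul_le_mul_of_nonneg_right this hδ.le).trans (le_max_left _ _)

structure Upcrossings (f : ℝ → ℝ) (a b t : ℝ) (n : ℕ) where
  u : Fin n → ℝ
  v : Fin n → ℝ
  mem : ∀ i, 0 ≤ u i ∧ u i < v i ∧ v i ≤ t
  lt : ∀ i j : Fin n, i < j → v i < u j
  cross : ∀ i, f (u i) < a ∧ b < f (v i)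

instance (f : ℝ → ℝ) (a b t : ℝ) : Nonempty (Σ n, Upcrossings f a b t n) :=
  ⟨⟨0, Fin.elim0, Fin.elim0, fun i => i.elim0, fun i => i.elim0, fun i => i.elim0⟩⟩

theorem upcross_eq_iSup (f : ℝ → ℝ) (a b t : ℝ) :
    upcross f a b t = ⨆ w : Σ n, Upcrossings f a b t n, (w.1 : ℝ≥0∞) :=
  le_antisymm
    (iSup_le fun n => iSup_le fun u => iSup_le fun v => iSup_le fun h =>
      le_iSup_of_le ⟨n, u, v, h.1, h.2.1, h.2.2⟩ le_rfl)
    (iSup_le fun ⟨n, u, v, h₁, h₂, h₃⟩ => le_iSup_of_le n <| le_iSup_of_le u <|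
      le_iSup_of_le v <| le_iSup_of_le ⟨h₁, h₂, h₃⟩ le_rfl)

theorem sum_mul_upcrossings_le_pVar {T δ : ℝ} (p : ℝ) (hδ : 0 < δ) {f : ℝ → ℝ}
    (hf : ContinuousOn f (Icc 0 T)) (F : Finset ℤ)
    (w : ∀ k : ℤ, Σ n, Upcrossings f (k * δ) ((k + 1) * δ) T n) :
    ∑ k ∈ F, ENNReal.ofReal (δ ^ p) * (w k).1 ≤ pVar p f 0 T := by
  have hcross : ∀ j : Σ k : F, Fin (w k).1, ∃ s t, (w j.1).2.u j.2 ≤ s ∧ s < t ∧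
      t ≤ (w j.1).2.v j.2 ∧ f s = j.1 * δ ∧ f t = (j.1 + 1) * δ ∧
      MapsTo f (Ioo s t) (Ioo (j.1 * δ) ((j.1 + 1) * δ)) := by
    rintro ⟨k, i⟩
    obtain ⟨hu0, huv, hvT⟩ := (w k).2.mem i
    exact (hf.mono (Icc_subset_Icc hu0 hvT)).exists_crossing huv.le ((w k).2.cross i).1
      (by gcongr; linarith) ((w k).2.cross i).2
  choose lo hi hu_lo hlt hhi_v hflo hfhi hmaps using hcross
  have hdisj : Pairwise (Disjoint on fun j => Ioo (lo j) (hi j)) := by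
    rintro ⟨k, i⟩ ⟨k', i'⟩ hne
    rcases eq_or_ne k k' with rfl | hk
    · have hii' : i ≠ i' := fun h => hne (h ▸ rfl)
      rw [onFun, Ioo_disjoint_Ioo]
      rcases hii'.lt_or_gt with h | h
      · exact (min_le_left _ _).trans <| (hhi_v _).trans <|
          ((w k).2.lt i i' h).le.trans <| (hu_lo ⟨k, i'⟩).trans (le_max_right _ _)
      · exact (min_le_right _ _).trans <| (hhi_v _).trans <|
          ((w k).2.lt i' i h).le.trans <| (hu_lo ⟨k, i⟩).trans (le_max_left _ _)
    · exact ((disjoint_Ioo_int_mul hδ (Subtype.coe_injective.ne hk)).preimage f).mono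
        (mapsTo_iff_subset_preimage.1 (hmaps _)) (mapsTo_iff_subset_preimage.1 (hmaps _))
  have hterm : ∀ j, ENNReal.ofReal (|f (hi j) - f (lo j)| ^ p) = ENNReal.ofReal (δ ^ p) := by
    intro j
    rw [hfhi, hflo, show ((j.1 : ℝ) + 1) * δ - j.1 * δ = δ by ring, abs_of_pos hδ]
  calc ∑ k ∈ F, ENNReal.ofReal (δ ^ p) * (w k).1
      = ∑ _j : Σ k : F, Fin (w k).1, ENNReal.ofReal (δ ^ p) := by
        rw [← Finset.mul_sum, Finset.sum_const, Finset.card_univ, Fintype.card_sigma,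
          nsmul_eq_mul, mul_comm, Nat.cast_sum]
        simp only [Fintype.card_fin, Finset.sum_coe_sort F fun k => ((w k).1 : ℝ≥0∞)]
    _ = ∑ j, ENNReal.ofReal (|f (hi j) - f (lo j)| ^ p) := by simp only [hterm]
    _ ≤ pVar p f 0 T := sum_le_pVar_of_pairwise_disjoint p f
        (fun j => ((w j.1).2.mem j.2).1.trans (hu_lo j)) hlt
        (fun j => (hhi_v j).trans ((w j.1).2.mem j.2).2.2) hdisj

theorem stmt19_general (T δ p : ℝ) (hδ : 0 < δ)
    (f : ℝ → ℝ) (hf : ContinuousOn f (Set.Icc 0 T)) :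
    ENNReal.ofReal (δ ^ p) * gridUpcross f δ T ≤ pVar p f 0 T := by
  rw [gridUpcross, ← ENNReal.tsum_mul_left, ENNReal.tsum_eq_iSup_sum]
  refine iSup_le fun F => ?_
  simp_rw [upcross_eq_iSup, ENNReal.mul_iSup]
  exact ENNReal.finsetSum_iSup_le (sum_mul_upcrossings_le_pVar p hδ hf F)

/-- upcrossing–variation inequality for a single grid:
`var_p(f,[0,T]) ≥ δ^p · M_T(f,δ)`. -/
theorem stmt19 (T δ p : ℝ) (hT : 0 < T) (hδ : 0 < δ) (hp : 0 < p)
    (f : ℝ → ℝ) (hf : ContinuousOn f (Set.Icc 0 T)) :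
    ENNReal.ofReal (δ ^ p) * gridUpcross f δ T ≤ pVar p f 0 T :=
  stmt19_general T δ p hδ f hf
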